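/- If 0 < c < c* (so that μ = 1/(1−cM) > 0), then E₁ = ∫₁^X f(z;μ,λ,−1/2) dz; and if c > c* (so that μ̃ = 1/(cM−1) > 0), then E₁ = exp(−2λ/μ̃) · ∫₁^X f(z;μ̃,λ,−1/2) dz. -/

import Mathlib

open MeasureTheory Real

/-- P.d.f. of the normal distribution with mean `m` and variance `s2`. -/
noncomputable def normalPdf (m s2 x : ℝ) : ℝ :=
  (Real.sqrt (2 * Real.pi * s2))⁻¹ * Real.exp (-(x - m) ^ 2 / (2 * s2))

/-- The elementary component
`E_k = ∫₀^{c(t−v)/(u+cv)} (1+x)^{−k} φ_{cM(1+x), c²D²(1+x)/(u+cv)}(x) dx`. -/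
noncomputable def elemComp (u c v t M D : ℝ) (k : ℕ) : ℝ :=
  ∫ x in (0:ℝ)..(c * (t - v) / (u + c * v)),
    ((1 + x) ^ k)⁻¹ *
      normalPdf (c * M * (1 + x)) (c ^ 2 * D ^ 2 * (1 + x) / (u + c * v)) x

/-- The exponential factor `E(z; μ, λ) = exp(−λ(z−μ)²/(2μ²z))`. -/
noncomputable def gigE (z μ lam : ℝ) : ℝ :=
  Real.exp (-(lam * (z - μ) ^ 2) / (2 * μ ^ 2 * z))

/-- Generalized inverse Gaussian density with `p = 1/2`. -/
noncomputable def gigPdfHalf (μ lam z : ℝ) : ℝ :=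
  Real.sqrt lam / (μ * Real.sqrt (2 * Real.pi)) * z ^ (-(1:ℝ)/2) * gigE z μ lam

/-- Generalized inverse Gaussian density with `p = −1/2`. -/
noncomputable def gigPdfNegHalf (μ lam z : ℝ) : ℝ :=
  Real.sqrt lam / Real.sqrt (2 * Real.pi) * z ^ (-(3:ℝ)/2) * gigE z μ lam

/-- Generalized inverse Gaussian density with `p = −3/2`. -/
noncomputable def gigPdfNeg3Half (μ lam z : ℝ) : ℝ :=
  lam ^ ((3:ℝ)/2) * μ / (Real.sqrt (2 * Real.pi) * (lam + μ)) * z ^ (-(5:ℝ)/2) * gigE z μ lam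

/-- Generalized inverse Gaussian density with `p = −5/2`. -/
noncomputable def gigPdfNeg5Half (μ lam z : ℝ) : ℝ :=
  lam ^ ((5:ℝ)/2) * μ ^ 2 / (Real.sqrt (2 * Real.pi) * (lam ^ 2 + 3 * lam * μ + 3 * μ ^ 2))
    * z ^ (-(7:ℝ)/2) * gigE z μ lam


/-!
Substituting `z = 1 + x` turns `E₁` into `∫₁^X z⁻¹ φ_{cMz, z/λ}(z - 1) dz`. Writing `a = 1 - cM`, the
normal exponent is `-λ(az - 1)²/(2z) = -λ(z - 1/a)²/(2(1/a)²z)`, so the integrand is the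
`p = -1/2` density with parameter `1/a`, whatever the sign of `a`. If `cM > 1` this parameter is
`-μ̃ < 0`, and `(z + μ̃)² = (z - μ̃)² + 4μ̃z` splits off the constant factor `exp(-2λ/μ̃)`.
-/

lemma rpow_neg_three_halves {z : ℝ} (hz : 0 < z) : z ^ (-(3:ℝ)/2) = (z * √z)⁻¹ := by
  rw [show (-(3:ℝ)/2) = -(1 + 1/2) by norm_num, rpow_neg hz.le, rpow_add hz, rpow_one,
    ← sqrt_eq_rpow]

lemma inv_mul_inv_sqrt_two_pi_mul_div {lam z : ℝ} (hlam : 0 < lam) (hz : 0 < z) :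
    z⁻¹ * (√(2 * π * (z / lam)))⁻¹ = √lam / √(2 * π) * z ^ (-(3:ℝ)/2) := by
  rw [rpow_neg_three_halves hz, show 2 * π * (z / lam) = 2 * π * z / lam by ring,
    sqrt_div' _ hlam.le, sqrt_mul (by positivity)]
  have : 0 < √lam := sqrt_pos.2 hlam
  have : 0 < √z := sqrt_pos.2 hz
  field_simp

lemma inv_mul_normalPdf_eq_gigPdfNegHalf {a lam z : ℝ} (ha : a ≠ 0) (hlam : 0 < lam)
    (hz : 0 < z) :
    z⁻¹ * normalPdf ((1 - a) * z) (z / lam) (z - 1) = gigPdfNegHalf (1 / a) lam z := by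
  have hexponent : -(z - 1 - (1 - a) * z) ^ 2 / (2 * (z / lam))
      = -(lam * (z - 1 / a) ^ 2) / (2 * (1 / a) ^ 2 * z) := by
    field_simp
    ring
  rw [normalPdf, gigPdfNegHalf, gigE, ← mul_assoc, inv_mul_inv_sqrt_two_pi_mul_div hlam hz,
    hexponent]

lemma gigE_neg {z μ : ℝ} (lam : ℝ) (hz : z ≠ 0) (hμ : μ ≠ 0) :
    gigE z (-μ) lam = exp (-2 * lam / μ) * gigE z μ lam := by
  rw [gigE, gigE, ← exp_add]
  congr 1
  field_simp
  ring

lemma gigPdfNegHalf_neg {z μ : ℝ} (lam : ℝ) (hz : z ≠ 0) (hμ : μ ≠ 0) :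
    gigPdfNegHalf (-μ) lam z = exp (-2 * lam / μ) * gigPdfNegHalf μ lam z := by
  rw [gigPdfNegHalf, gigPdfNegHalf, gigE_neg lam hz hμ]
  ring

lemma elemComp_one_eq_integral (u c v t M D : ℝ) :
    elemComp u c v t M D 1
      = ∫ z in (1:ℝ)..(c * (t - v) / (u + c * v) + 1),
          z⁻¹ * normalPdf (c * M * z) (z / ((u + c * v) / (c ^ 2 * D ^ 2))) (z - 1) := by
  have hshift := intervalIntegral.integral_comp_add_left
    (fun z ↦ z⁻¹ * normalPdf (c * M * z) (z / ((u + c * v) / (c ^ 2 * D ^ 2))) (z - 1)) (1:ℝ)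
    (a := 0) (b := c * (t - v) / (u + c * v))
  rw [add_zero, add_comm 1] at hshift
  rw [← hshift, elemComp]
  simp only [pow_one, add_sub_cancel_left, div_div_eq_mul_div, mul_comm _ (c ^ 2 * D ^ 2)]

/-- Theorem on `E₁` in terms of the inverse Gaussian c.d.f. (`p = −1/2`). -/
theorem elemComp_one_eq (u c v t M D : ℝ)
    (hu : 0 < u) (hc : 0 < c) (hv : 0 ≤ v) (ht : v < t) (hM : 0 < M) (hD : 0 < D) :
    (c < 1 / M →
      elemComp u c v t M D 1
        = ∫ z in (1:ℝ)..(c * (t - v) / (u + c * v) + 1),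
            gigPdfNegHalf (1 / (1 - c * M)) ((u + c * v) / (c ^ 2 * D ^ 2)) z)
    ∧ (1 / M < c →
      elemComp u c v t M D 1
        = Real.exp (-2 * ((u + c * v) / (c ^ 2 * D ^ 2)) / (1 / (c * M - 1))) *
            ∫ z in (1:ℝ)..(c * (t - v) / (u + c * v) + 1),
              gigPdfNegHalf (1 / (c * M - 1)) ((u + c * v) / (c ^ 2 * D ^ 2)) z) := by
  set lam := (u + c * v) / (c ^ 2 * D ^ 2)
  have hlam : 0 < lam := by positivity
  have hX : 1 ≤ c * (t - v) / (u + c * v) + 1 := by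
    have : 0 ≤ c * (t - v) / (u + c * v) := by have := sub_pos.2 ht; positivity
    linarith
  have hgig {a : ℝ} (ha : a ≠ 0) (hcM : c * M = 1 - a) :
      elemComp u c v t M D 1 = ∫ z in (1:ℝ)..(c * (t - v) / (u + c * v) + 1),
        gigPdfNegHalf (1 / a) lam z := by
    rw [elemComp_one_eq_integral, hcM]
    refine intervalIntegral.integral_congr fun z hz ↦ ?_
    rw [Set.uIcc_of_le hX] at hz
    exact inv_mul_normalPdf_eq_gigPdfNegHalf ha hlam (by linarith [hz.1])
  constructor
  · intro hcM
    rw [lt_div_iff₀ hM] at hcM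
    exact hgig (by linarith) (by ring)
  · intro hcM
    rw [div_lt_iff₀ hM] at hcM
    have hμ : 1 / (c * M - 1) ≠ 0 := one_div_ne_zero (sub_pos.2 hcM).ne'
    rw [hgig (a := 1 - c * M) (by linarith) (by ring), ← intervalIntegral.integral_const_mul]
    refine intervalIntegral.integral_congr fun z hz ↦ ?_
    rw [Set.uIcc_of_le hX] at hz
    rw [← gigPdfNegHalf_neg lam (by linarith [hz.1]) hμ, ← one_div_neg_eq_neg_one_div, neg_sub]
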